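/- Let σ ∈ {naive, stb, stage, pref, sem} and let 𝕊 be an extension-set such that |𝕊| is odd. If some equivalence class K ∈ K(𝕊) has |K| = 2, then there is no σ-compact AF F with σ(F) = 𝕊. -/

import Mathlib

structure AF where
  A : Finset ℕ
  R : Set (ℕ × ℕ)
  R_sub : ∀ p ∈ R, p.1 ∈ A ∧ p.2 ∈ A

namespace AF

def cf (F : AF) : Set (Set ℕ) :=
  {S | S ⊆ ↑F.A ∧ ∀ a ∈ S, ∀ b ∈ S, (a, b) ∉ F.R}

def defends (F : AF) (S : Set ℕ) (a : ℕ) : Prop :=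
  ∀ b, (b, a) ∈ F.R → ∃ s ∈ S, (s, b) ∈ F.R

def adm (F : AF) : Set (Set ℕ) :=
  {S | S ∈ F.cf ∧ ∀ a ∈ S, F.defends S a}

def rng (F : AF) (S : Set ℕ) : Set ℕ :=
  S ∪ {b | ∃ s ∈ S, (s, b) ∈ F.R}

def naive (F : AF) : Set (Set ℕ) :=
  {S | S ∈ F.cf ∧ ∀ T ∈ F.cf, S ⊆ T → S = T}

def stb (F : AF) : Set (Set ℕ) :=
  {S | S ∈ F.cf ∧ ∀ a ∈ F.A, a ∉ S → ∃ s ∈ S, (s, a) ∈ F.R}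

def pref (F : AF) : Set (Set ℕ) :=
  {S | S ∈ F.adm ∧ ∀ T ∈ F.adm, S ⊆ T → S = T}

def stage (F : AF) : Set (Set ℕ) :=
  {S | S ∈ F.cf ∧ ¬ ∃ T ∈ F.cf, F.rng S ⊂ F.rng T}

def sem (F : AF) : Set (Set ℕ) :=
  {S | S ∈ F.adm ∧ ¬ ∃ T ∈ F.adm, F.rng S ⊂ F.rng T}

end AF

abbrev Semantics := AF → Set (Set ℕ)

def StandardSemantics : Set Semantics :=
  {AF.naive, AF.stb, AF.stage, AF.pref, AF.sem}

def AFCompact (σ : Semantics) (F : AF) : Prop :=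
  ∀ a ∈ F.A, ∃ S ∈ σ F, a ∈ S

def CAF (σ : Semantics) : Set AF := {F | AFCompact σ F}

def ArgS (𝕊 : Set (Set ℕ)) : Set ℕ := ⋃₀ 𝕊

def PairsS (𝕊 : Set (Set ℕ)) : Set (ℕ × ℕ) :=
  {p | ∃ S ∈ 𝕊, p.1 ∈ S ∧ p.2 ∈ S}

def IsExtensionSet (𝕊 : Set (Set ℕ)) : Prop := (ArgS 𝕊).Finite

def AFStep (F : AF) (a b : ℕ) : Prop := (a, b) ∈ F.R ∨ (b, a) ∈ F.R

def AFConnected (F : AF) : Prop :=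
  ∀ a ∈ F.A, ∀ b ∈ F.A, Relation.ReflTransGen (AFStep F) a b

def sameComp (F : AF) (a b : ℕ) : Prop := Relation.ReflTransGen (AFStep F) a b

def comps (F : AF) : Set (Set ℕ) :=
  {K | ∃ a ∈ F.A, K = {b ∈ (↑F.A : Set ℕ) | sameComp F a b}}

def nopairs (𝕊 : Set (Set ℕ)) (a b : ℕ) : Prop :=
  a ∈ ArgS 𝕊 ∧ b ∈ ArgS 𝕊 ∧ (a, b) ∉ PairsS 𝕊

def compsS (𝕊 : Set (Set ℕ)) : Set (Set ℕ) :=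
  {K | ∃ a ∈ ArgS 𝕊, K = {b ∈ ArgS 𝕊 | Relation.ReflTransGen (nopairs 𝕊) a b}}

noncomputable def sigmaMax (σ : Semantics) (n : ℕ) : ℕ :=
  sSup {k | ∃ F : AF, F.A.card = n ∧ (σ F).ncard = k}

noncomputable def sigmaMaxCon (σ : Semantics) (n : ℕ) : ℕ :=
  sSup {k | ∃ F : AF, F.A.card = n ∧ AFConnected F ∧ (σ F).ncard = k}

noncomputable def sigmaMax2 (σ : Semantics) (n : ℕ) : ℕ :=
  sSup ({k | ∃ F : AF, F.A.card = n ∧ (σ F).ncard = k} \ {sigmaMax σ n})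

def cfSet (𝕊 : Set (Set ℕ)) : Set (Set ℕ) :=
  {S | S ⊆ ArgS 𝕊 ∧ ∀ a ∈ S, ∀ b ∈ S, (a, b) ∈ PairsS 𝕊}

def plusSet (𝕊 : Set (Set ℕ)) : Set (Set ℕ) :=
  {S | S ∈ cfSet 𝕊 ∧ ∀ T ∈ cfSet 𝕊, S ⊆ T → S = T}

def minusSet (𝕊 : Set (Set ℕ)) : Set (Set ℕ) := plusSet 𝕊 \ 𝕊

def Sig (σ : Semantics) : Set (Set (Set ℕ)) := {𝕊 | ∃ F : AF, σ F = 𝕊}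

def cSig (σ : Semantics) : Set (Set (Set ℕ)) :=
  {𝕊 | ∃ F : AF, AFCompact σ F ∧ σ F = 𝕊}

def Pcon (σ : Semantics) (n : ℕ) : Set ℕ :=
  {k | ∃ F : AF, AFCompact σ F ∧ AFConnected F ∧ F.A.card = n ∧ (σ F).ncard = k}

open Classical in
noncomputable def restrictAF (F : AF) (K : Set ℕ) : AF where
  A := F.A.filter (fun a => a ∈ K)
  R := {p | p ∈ F.R ∧ p.1 ∈ K ∧ p.2 ∈ K}
  R_sub := fun p hp => by
    have h := F.R_sub p hp.1
    simp only [Finset.mem_filter]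
    exact ⟨⟨h.1, hp.2.1⟩, ⟨h.2, hp.2.2⟩⟩

def IsExclusionMapping (𝕊 : Set (Set ℕ)) (Rm : Set (ℕ × ℕ)) : Prop :=
  ∃ f : Set ℕ → ℕ,
    (∀ S ∈ minusSet 𝕊, f S ∈ ArgS 𝕊 ∧ f S ∉ S) ∧
    Rm = {p | ∃ S ∈ minusSet 𝕊, p.1 ∈ S ∧ p.2 = f S ∧ p ∉ PairsS 𝕊}

def Independent (𝕊 : Set (Set ℕ)) : Prop :=
  ∃ Rm : Set (ℕ × ℕ), IsExclusionMapping 𝕊 Rm ∧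
    (∀ a b, (a, b) ∈ Rm → (b, a) ∈ Rm → a = b) ∧
    ∀ S ∈ 𝕊, ∀ a ∈ ArgS 𝕊 \ S, ∃ s ∈ S, (s, a) ∉ Rm ∪ PairsS 𝕊

def ConflictExplicit (σ : Semantics) (F : AF) : Prop :=
  ∀ a ∈ F.A, ∀ b ∈ F.A, (a, b) ∉ PairsS (σ F) → (a, b) ∈ F.R ∨ (b, a) ∈ F.R

noncomputable def canonicalCF (𝕊 : Set (Set ℕ)) (h : IsExtensionSet 𝕊) : AF where
  A := h.toFinset
  R := {p | p.1 ∈ ArgS 𝕊 ∧ p.2 ∈ ArgS 𝕊 ∧ p ∉ PairsS 𝕊}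
  R_sub := fun p hp => by
    exact ⟨(Set.Finite.mem_toFinset _).2 hp.1, (Set.Finite.mem_toFinset _).2 hp.2.1⟩

/-!
Write the size-two class as `K = {a, b}`: `a` and `b` never share an extension, while every other
argument shares one with each of them. If `σ(F) = 𝕊` for a compact `F`, extensions are
conflict-free and cover `F.A`, so the only attacks touching `a` or `b` go between `a` and `b`.
Maximality (or stability) then puts exactly one of `a`, `b` into each extension. The transposition
`a ↔ b` preserves the conflict graph, which settles naive semantics; for the other four semantics an
extension containing `b` but not `a` forces an attack `a → b` to be answered by `b → a`, so the
transposition is an automorphism of `F`. Either way it maps `σ(F)` to itself and pairs the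
extensions containing `a` with those containing `b`, so `|𝕊|` is even.
-/

open Set Equiv

theorem even_ncard_of_involutive {α : Type*} {s : Set α} {f : α → α}
    (hf : Function.Involutive f) (hs : ∀ x ∈ s, f x ∈ s) {p : α → Prop}
    (hp : ∀ x ∈ s, p (f x) ↔ ¬ p x) : Even s.ncard := by
  rcases s.finite_or_infinite with hfin | hinf
  swap
  · rw [hinf.ncard]
    exact ⟨0, rfl⟩
  set t := {x ∈ s | p x}
  have htfin : t.Finite := hfin.subset fun x hx => hx.1
  have hsplit : s = t ∪ f '' t := by
    ext x
    refine ⟨fun hx => ?_, ?_⟩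
    · by_cases hpx : p x
      · exact Or.inl ⟨hx, hpx⟩
      · exact Or.inr ⟨f x, ⟨hs x hx, (hp x hx).2 hpx⟩, hf x⟩
    · rintro (hx | ⟨y, hy, rfl⟩)
      exacts [hx.1, hs y hy.1]
  have hdisj : Disjoint t (f '' t) := by
    rw [disjoint_left]
    rintro _ hx ⟨y, hy, rfl⟩
    exact (hp y hy.1).1 hx.2 hy.2
  rw [hsplit, ncard_union_eq hdisj htfin (htfin.image f), ncard_image_of_injective _ hf.injective]
  exact ⟨t.ncard, rfl⟩

lemma swap_apply_mem_iff {α : Type*} [DecidableEq α] {s : Set α} {a b x : α} (ha : a ∈ s)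
    (hb : b ∈ s) : swap a b x ∈ s ↔ x ∈ s := by
  rcases eq_or_ne x a with rfl | hxa
  · simp [ha, hb]
  rcases eq_or_ne x b with rfl | hxb
  · simp [ha, hb]
  rw [swap_apply_of_ne_of_ne hxa hxb]

namespace AF

variable {F : AF} {e : Equiv.Perm ℕ} {S : Set ℕ} {a b x y : ℕ}

lemma rng_mono {T : Set ℕ} (h : S ⊆ T) : F.rng S ⊆ F.rng T := by
  rintro z (hz | ⟨s, hs, hsz⟩)
  exacts [Or.inl (h hz), Or.inr ⟨s, h hs, hsz⟩]

lemma cf_mono {T : Set ℕ} (hT : T ∈ F.cf) (h : S ⊆ T) : S ∈ F.cf :=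
  ⟨h.trans hT.1, fun x hx y hy => hT.2 x (h hx) y (h hy)⟩

lemma rng_ssubset_of_mem {T : Set ℕ} (hST : F.rng S ⊆ F.rng T) (hxT : x ∈ T)
    (hx : x ∉ F.rng S) : F.rng S ⊂ F.rng T :=
  ssubset_of_subset_not_subset hST fun h => hx (h (Or.inl hxT))

lemma rng_ssubset_rng_insert (hx : x ∉ F.rng S) : F.rng S ⊂ F.rng (insert x S) :=
  rng_ssubset_of_mem (rng_mono (subset_insert x S)) (mem_insert x S) hx

def IsAutomorphism (F : AF) (e : Equiv.Perm ℕ) : Prop :=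
  (∀ x, e x ∈ F.A ↔ x ∈ F.A) ∧ ∀ x y, (e x, e y) ∈ F.R ↔ (x, y) ∈ F.R

/-- Naive semantics sees only the undirected conflict graph `AFStep`. -/
def IsConflictAutomorphism (F : AF) (e : Equiv.Perm ℕ) : Prop :=
  (∀ x, e x ∈ F.A ↔ x ∈ F.A) ∧ ∀ x y, AFStep F (e x) (e y) ↔ AFStep F x y

lemma IsAutomorphism.symm (he : F.IsAutomorphism e) : F.IsAutomorphism e.symm :=
  ⟨fun x => by simpa using (he.1 (e.symm x)).symm,
    fun x y => by simpa using (he.2 (e.symm x) (e.symm y)).symm⟩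

lemma IsConflictAutomorphism.symm (he : F.IsConflictAutomorphism e) :
    F.IsConflictAutomorphism e.symm :=
  ⟨fun x => by simpa using (he.1 (e.symm x)).symm,
    fun x y => by simpa using (he.2 (e.symm x) (e.symm y)).symm⟩

lemma IsAutomorphism.isConflictAutomorphism (he : F.IsAutomorphism e) :
    F.IsConflictAutomorphism e :=
  ⟨he.1, fun x y => by simp only [AFStep, he.2]⟩

lemma image_mem_cf (he : F.IsConflictAutomorphism e) (hS : S ∈ F.cf) : e '' S ∈ F.cf := by
  refine ⟨?_, ?_⟩
  · rintro _ ⟨x, hx, rfl⟩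
    exact (he.1 x).2 (hS.1 hx)
  · rintro _ ⟨x, hx, rfl⟩ _ ⟨y, hy, rfl⟩ hxy
    rcases (he.2 x y).1 (Or.inl hxy) with h | h
    exacts [hS.2 x hx y hy h, hS.2 y hy x hx h]

lemma image_mem_stb (he : F.IsAutomorphism e) (hS : S ∈ F.stb) : e '' S ∈ F.stb := by
  refine ⟨image_mem_cf he.isConflictAutomorphism hS.1, fun x hx hxS => ?_⟩
  rw [mem_image_equiv] at hxS
  obtain ⟨s, hs, hsx⟩ := hS.2 (e.symm x) ((he.symm.1 x).2 hx) hxS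
  exact ⟨e s, mem_image_of_mem e hs, by simpa using (he.2 s (e.symm x)).2 hsx⟩

lemma image_mem_adm (he : F.IsAutomorphism e) (hS : S ∈ F.adm) : e '' S ∈ F.adm := by
  refine ⟨image_mem_cf he.isConflictAutomorphism hS.1, ?_⟩
  rintro _ ⟨x, hx, rfl⟩ y hyx
  obtain ⟨s, hs, hsy⟩ := hS.2 x hx (e.symm y) (by simpa using (he.symm.2 y (e x)).2 hyx)
  exact ⟨e s, mem_image_of_mem e hs, by simpa using (he.2 s (e.symm y)).2 hsy⟩

lemma rng_image (he : F.IsAutomorphism e) (S : Set ℕ) : F.rng (e '' S) = e '' F.rng S := by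
  ext z
  simp only [rng, mem_union, mem_ofPred_eq, exists_mem_image]
  simp only [mem_image_equiv]
  refine or_congr_right (exists_congr fun s => and_congr_right fun _ => ?_)
  simpa using he.2 s (e.symm z)

lemma image_eq_of_maximal {P : Set (Set ℕ)} (hP : ∀ T ∈ P, e.symm '' T ∈ P)
    (hS : ∀ T ∈ P, S ⊆ T → S = T) : ∀ T ∈ P, e '' S ⊆ T → e '' S = T := by
  intro T hT hST
  rw [hS _ (hP T hT) ((e.subset_symm_image S T).2 hST), e.image_symm_image]

lemma not_rng_ssubset_image (he : F.IsAutomorphism e) {P : Set (Set ℕ)}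
    (hP : ∀ T ∈ P, e.symm '' T ∈ P) (hS : ¬ ∃ T ∈ P, F.rng S ⊂ F.rng T) :
    ¬ ∃ T ∈ P, F.rng (e '' S) ⊂ F.rng T := by
  rintro ⟨T, hT, hlt⟩
  refine hS ⟨e.symm '' T, hP T hT, ?_⟩
  have := e.symm.injective.image_strictMono hlt
  rwa [rng_image he, e.symm_image_image, ← rng_image he.symm] at this

lemma image_mem_naive (he : F.IsConflictAutomorphism e) (hS : S ∈ F.naive) :
    e '' S ∈ F.naive :=
  ⟨image_mem_cf he hS.1, image_eq_of_maximal (fun _ hT => image_mem_cf he.symm hT) hS.2⟩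

lemma image_mem_pref (he : F.IsAutomorphism e) (hS : S ∈ F.pref) : e '' S ∈ F.pref :=
  ⟨image_mem_adm he hS.1, image_eq_of_maximal (fun _ hT => image_mem_adm he.symm hT) hS.2⟩

lemma image_mem_stage (he : F.IsAutomorphism e) (hS : S ∈ F.stage) : e '' S ∈ F.stage :=
  ⟨image_mem_cf he.isConflictAutomorphism hS.1,
    not_rng_ssubset_image he (fun _ hT => image_mem_cf he.symm.isConflictAutomorphism hT) hS.2⟩

lemma image_mem_sem (he : F.IsAutomorphism e) (hS : S ∈ F.sem) : e '' S ∈ F.sem :=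
  ⟨image_mem_adm he hS.1, not_rng_ssubset_image he (fun _ hT => image_mem_adm he.symm hT) hS.2⟩

def IsolatedPair (F : AF) (a b : ℕ) : Prop :=
  ∀ x y, (x, y) ∈ F.R → (x = a ∧ y = b) ∨ (x = b ∧ y = a) ∨ (x ≠ a ∧ x ≠ b ∧ y ≠ a ∧ y ≠ b)

namespace IsolatedPair

lemma symm (h : F.IsolatedPair a b) : F.IsolatedPair b a := by
  intro x y hxy
  rcases h x y hxy with h' | h' | h' <;> tauto

lemma eq_of_attacks (h : F.IsolatedPair a b) (hxa : (x, a) ∈ F.R) : x = b := by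
  rcases h x a hxa with ⟨rfl, rfl⟩ | ⟨rfl, -⟩ | ⟨-, -, h', -⟩
  exacts [rfl, rfl, absurd rfl h']

lemma eq_of_attacked (h : F.IsolatedPair a b) (hay : (a, y) ∈ F.R) : y = b := by
  rcases h a y hay with ⟨-, rfl⟩ | ⟨rfl, rfl⟩ | ⟨h', -⟩
  exacts [rfl, rfl, absurd rfl h']

lemma insert_mem_cf (h : F.IsolatedPair a b) (hab : a ≠ b) (ha : a ∈ F.A) (hS : S ∈ F.cf)
    (hbS : b ∉ S) : insert a S ∈ F.cf := by
  have hne : ∀ x ∈ insert a S, x ≠ b := by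
    rintro x (rfl | hx) rfl
    exacts [hab rfl, hbS hx]
  refine ⟨insert_subset ha hS.1, ?_⟩
  rintro x (rfl | hx) y hy hxy
  · exact hne y hy (h.eq_of_attacked hxy)
  · rcases hy with rfl | hy
    · exact hne x (mem_insert_of_mem _ hx) (h.eq_of_attacks hxy)
    · exact hS.2 x hx y hy hxy

lemma insert_mem_adm (h : F.IsolatedPair a b) (hab : a ≠ b) (ha : a ∈ F.A) (hS : S ∈ F.adm)
    (hbS : b ∉ S) (hdef : (b, a) ∈ F.R → (a, b) ∈ F.R) : insert a S ∈ F.adm := by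
  refine ⟨h.insert_mem_cf hab ha hS.1 hbS, ?_⟩
  rintro x (rfl | hx) y hyx
  · obtain rfl := h.eq_of_attacks hyx
    exact ⟨x, mem_insert x S, hdef hyx⟩
  · obtain ⟨s, hs, hsy⟩ := hS.2 x hx y hyx
    exact ⟨s, mem_insert_of_mem _ hs, hsy⟩

/-- Whichever of `a`, `b` is not attacked one-sidedly by the other can defend itself. -/
lemma insert_mem_adm_or (h : F.IsolatedPair a b) (hab : a ≠ b) (ha : a ∈ F.A) (hb : b ∈ F.A)
    (hS : S ∈ F.adm) (haS : a ∉ S) (hbS : b ∉ S) :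
    insert a S ∈ F.adm ∨ insert b S ∈ F.adm := by
  by_cases hdef : (b, a) ∈ F.R → (a, b) ∈ F.R
  · exact Or.inl (h.insert_mem_adm hab ha hS hbS hdef)
  · obtain ⟨-, hnab⟩ := Classical.not_imp.1 hdef
    exact Or.inr (h.symm.insert_mem_adm hab.symm hb hS haS fun hRab => absurd hRab hnab)

lemma notMem_rng (h : F.IsolatedPair a b) (haS : a ∉ S) (hbS : b ∉ S) : a ∉ F.rng S := by
  rintro (haS' | ⟨s, hs, hsa⟩)
  exacts [haS haS', hbS (h.eq_of_attacks hsa ▸ hs)]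

lemma mem_or_mem {σ : Semantics} (hσ : σ ∈ StandardSemantics) (h : F.IsolatedPair a b)
    (hab : a ≠ b) (ha : a ∈ F.A) (hb : b ∈ F.A) (hS : S ∈ σ F) : a ∈ S ∨ b ∈ S := by
  by_contra! hnot
  obtain ⟨haS, hbS⟩ := hnot
  have hrng_a := rng_ssubset_rng_insert (h.notMem_rng haS hbS)
  have hrng_b := rng_ssubset_rng_insert (h.symm.notMem_rng hbS haS)
  rcases hσ with rfl | rfl | rfl | rfl | rfl
  · exact haS (hS.2 _ (h.insert_mem_cf hab ha hS.1 hbS) (subset_insert a S) ▸ mem_insert a S)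
  · obtain ⟨s, hs, hsa⟩ := hS.2 a ha haS
    exact hbS (h.eq_of_attacks hsa ▸ hs)
  · exact hS.2 ⟨_, h.insert_mem_cf hab ha hS.1 hbS, hrng_a⟩
  · rcases h.insert_mem_adm_or hab ha hb hS.1 haS hbS with hadm | hadm
    · exact haS (hS.2 _ hadm (subset_insert a S) ▸ mem_insert a S)
    · exact hbS (hS.2 _ hadm (subset_insert b S) ▸ mem_insert b S)
  · rcases h.insert_mem_adm_or hab ha hb hS.1 haS hbS with hadm | hadm
    exacts [hS.2 ⟨_, hadm, hrng_a⟩, hS.2 ⟨_, hadm, hrng_b⟩]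

lemma attacks_of_mem_stb (h : F.IsolatedPair a b) (ha : a ∈ F.A) (hS : S ∈ F.stb)
    (haS : a ∉ S) : (b, a) ∈ F.R := by
  obtain ⟨s, -, hsa⟩ := hS.2 a ha haS
  rwa [h.eq_of_attacks hsa] at hsa

lemma attacks_of_mem_adm (h : F.IsolatedPair a b) (hS : S ∈ F.adm) (hbS : b ∈ S)
    (hRab : (a, b) ∈ F.R) : (b, a) ∈ F.R := by
  obtain ⟨s, -, hsa⟩ := hS.2 b hbS a hRab
  rwa [h.eq_of_attacks hsa] at hsa

/-- Trading `b` for `a` would enlarge the range: `a` covers `b`, and `b` attacks nothing but `a`. -/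
lemma attacks_of_mem_stage (h : F.IsolatedPair a b) (hab : a ≠ b) (ha : a ∈ F.A)
    (hS : S ∈ F.stage) (hbS : b ∈ S) (haS : a ∉ S) (hRab : (a, b) ∈ F.R) : (b, a) ∈ F.R := by
  by_contra hba
  have hT : insert a (S \ {b}) ∈ F.cf :=
    h.insert_mem_cf hab ha (cf_mono hS.1 sdiff_subset) fun hb => hb.2 rfl
  have hsub : F.rng S ⊆ F.rng (insert a (S \ {b})) := by
    rintro z (hz | ⟨s, hs, hsz⟩)
    · rcases eq_or_ne z b with rfl | hzb
      · exact Or.inr ⟨a, mem_insert a _, hRab⟩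
      · exact Or.inl (mem_insert_of_mem a ⟨hz, hzb⟩)
    · rcases eq_or_ne s b with rfl | hsb
      · exact absurd (h.symm.eq_of_attacked hsz ▸ hsz) hba
      · exact Or.inr ⟨s, mem_insert_of_mem a ⟨hs, hsb⟩, hsz⟩
  have ha_rng : a ∉ F.rng S := by
    rintro (ha' | ⟨s, -, hsa⟩)
    · exact haS ha'
    · exact hba (h.eq_of_attacks hsa ▸ hsa)
  exact hS.2 ⟨_, hT, rng_ssubset_of_mem hsub (mem_insert a _) ha_rng⟩

lemma swap_step (h : F.IsolatedPair a b) (hxy : (x, y) ∈ F.R) :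
    AFStep F (swap a b x) (swap a b y) := by
  rcases h x y hxy with ⟨rfl, rfl⟩ | ⟨rfl, rfl⟩ | ⟨hxa, hxb, hya, hyb⟩
  · simpa [AFStep] using Or.inr hxy
  · simpa [AFStep] using Or.inr hxy
  · rw [swap_apply_of_ne_of_ne hxa hxb, swap_apply_of_ne_of_ne hya hyb]
    exact Or.inl hxy

lemma swap_mem_R (h : F.IsolatedPair a b) (hsymm : (a, b) ∈ F.R ↔ (b, a) ∈ F.R)
    (hxy : (x, y) ∈ F.R) : (swap a b x, swap a b y) ∈ F.R := by
  rcases h x y hxy with ⟨rfl, rfl⟩ | ⟨rfl, rfl⟩ | ⟨hxa, hxb, hya, hyb⟩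
  · simpa using hsymm.1 hxy
  · simpa using hsymm.2 hxy
  · rwa [swap_apply_of_ne_of_ne hxa hxb, swap_apply_of_ne_of_ne hya hyb]

lemma swap_isConflictAutomorphism (h : F.IsolatedPair a b) (ha : a ∈ F.A) (hb : b ∈ F.A) :
    F.IsConflictAutomorphism (swap a b) := by
  have hstep : ∀ x y, AFStep F x y → AFStep F (swap a b x) (swap a b y) := by
    rintro x y (hxy | hyx)
    exacts [h.swap_step hxy, (h.swap_step hyx).symm]
  exact ⟨fun x => swap_apply_mem_iff (s := (F.A : Set ℕ)) ha hb,
    fun x y => ⟨fun hxy => by simpa using hstep _ _ hxy, hstep x y⟩⟩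

lemma swap_isAutomorphism (h : F.IsolatedPair a b) (ha : a ∈ F.A) (hb : b ∈ F.A)
    (hsymm : (a, b) ∈ F.R ↔ (b, a) ∈ F.R) : F.IsAutomorphism (swap a b) :=
  ⟨fun x => swap_apply_mem_iff (s := (F.A : Set ℕ)) ha hb,
    fun x y => ⟨fun hxy => by simpa using h.swap_mem_R hsymm hxy, h.swap_mem_R hsymm⟩⟩

lemma swap_image_mem {σ : Semantics} (hσ : σ ∈ StandardSemantics) (h : F.IsolatedPair a b)
    (hab : a ≠ b) (ha : a ∈ F.A) (hb : b ∈ F.A) (hSa : ∃ S ∈ σ F, a ∈ S ∧ b ∉ S)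
    (hSb : ∃ S ∈ σ F, b ∈ S ∧ a ∉ S) (hS : S ∈ σ F) : swap a b '' S ∈ σ F := by
  obtain ⟨Sa, hSa, haSa, hbSa⟩ := hSa
  obtain ⟨Sb, hSb, hbSb, haSb⟩ := hSb
  rcases hσ with rfl | rfl | rfl | rfl | rfl
  · exact image_mem_naive (h.swap_isConflictAutomorphism ha hb) hS
  · exact image_mem_stb (h.swap_isAutomorphism ha hb (iff_of_true
      (h.symm.attacks_of_mem_stb hb hSa hbSa) (h.attacks_of_mem_stb ha hSb haSb))) hS
  · exact image_mem_stage (h.swap_isAutomorphism ha hb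
      ⟨h.attacks_of_mem_stage hab ha hSb hbSb haSb,
        h.symm.attacks_of_mem_stage hab.symm hb hSa haSa hbSa⟩) hS
  · exact image_mem_pref (h.swap_isAutomorphism ha hb
      ⟨h.attacks_of_mem_adm hSb.1 hbSb, h.symm.attacks_of_mem_adm hSa.1 haSa⟩) hS
  · exact image_mem_sem (h.swap_isAutomorphism ha hb
      ⟨h.attacks_of_mem_adm hSb.1 hbSb, h.symm.attacks_of_mem_adm hSa.1 haSa⟩) hS

end IsolatedPair

end AF

section ExtensionSets

variable {𝕊 : Set (Set ℕ)} {a b : ℕ}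

lemma pairsS_self (ha : a ∈ ArgS 𝕊) : (a, a) ∈ PairsS 𝕊 :=
  let ⟨S, hS, haS⟩ := ha
  ⟨S, hS, haS, haS⟩

lemma pairsS_symm (h : (a, b) ∈ PairsS 𝕊) : (b, a) ∈ PairsS 𝕊 :=
  let ⟨S, hS, haS, hbS⟩ := h
  ⟨S, hS, hbS, haS⟩

lemma exists_pair_of_mem_compsS {K : Set ℕ} (hK : K ∈ compsS 𝕊) (hK2 : K.ncard = 2) :
    ∃ a b, a ≠ b ∧ a ∈ ArgS 𝕊 ∧ b ∈ ArgS 𝕊 ∧ (a, b) ∉ PairsS 𝕊 ∧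
      ∀ c ∈ ArgS 𝕊, c ≠ a → c ≠ b → (a, c) ∈ PairsS 𝕊 ∧ (b, c) ∈ PairsS 𝕊 := by
  obtain ⟨a, ha, rfl⟩ := hK
  set K := {b ∈ ArgS 𝕊 | Relation.ReflTransGen (nopairs 𝕊) a b}
  have haK : a ∈ K := ⟨ha, .refl⟩
  obtain ⟨b, hKb⟩ := ncard_eq_one.1 (by rw [ncard_sdiff_singleton_of_mem haK, hK2] :
    (K \ {a}).ncard = 1)
  have hK_sub : ∀ c ∈ K, c = a ∨ c = b := fun c hc =>
    or_iff_not_imp_left.2 fun hca => mem_singleton_iff.1 (hKb ▸ ⟨hc, hca⟩)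
  obtain ⟨⟨hb, hreach⟩, hba⟩ : b ∈ K \ {a} := hKb ▸ rfl
  have hpaired : ∀ c ∈ ArgS 𝕊, c ≠ a → c ≠ b → (a, c) ∈ PairsS 𝕊 ∧ (b, c) ∈ PairsS 𝕊 := by
    intro c hc hca hcb
    have hcK : c ∉ K := fun hcK => (hK_sub c hcK).elim hca hcb
    exact ⟨by_contra fun hac => hcK ⟨hc, .single ⟨ha, hc, hac⟩⟩,
      by_contra fun hbc => hcK ⟨hc, hreach.tail ⟨hb, hc, hbc⟩⟩⟩
  refine ⟨a, b, Ne.symm hba, ha, hb, ?_, hpaired⟩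
  -- the first step of a path from `a` to `b` stays in `K = {a, b}` and cannot be a loop
  rcases hreach.cases_head with rfl | ⟨c, hac, -⟩
  · exact absurd rfl hba
  rcases hK_sub c ⟨hac.2.1, .single hac⟩ with rfl | rfl
  · exact absurd (pairsS_self ha) hac.2.2
  · exact hac.2.2

lemma mem_cf_of_mem_standardSemantics {σ : Semantics} (hσ : σ ∈ StandardSemantics) {F : AF}
    {S : Set ℕ} (hS : S ∈ σ F) : S ∈ F.cf := by
  rcases hσ with rfl | rfl | rfl | rfl | rfl
  exacts [hS.1, hS.1, hS.1, hS.1.1, hS.1.1]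

lemma isolatedPair_of_forall_pairsS {σ : Semantics} {F : AF} (hcomp : AFCompact σ F)
    (hcf : ∀ S ∈ σ F, S ∈ F.cf) (ha : a ∈ ArgS (σ F)) (hb : b ∈ ArgS (σ F))
    (hpaired : ∀ c ∈ ArgS (σ F), c ≠ a → c ≠ b → (a, c) ∈ PairsS (σ F) ∧ (b, c) ∈ PairsS (σ F)) :
    F.IsolatedPair a b := by
  have hArg : ∀ x ∈ F.A, x ∈ ArgS (σ F) := fun x hx =>
    let ⟨S, hS, hxS⟩ := hcomp x hx
    ⟨S, hS, hxS⟩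
  have hnR : ∀ {x y}, (x, y) ∈ F.R → (x, y) ∉ PairsS (σ F) :=
    fun hxy ⟨S, hS, hx, hy⟩ => (hcf S hS).2 _ hx _ hy hxy
  have key : ∀ {u v}, u = a ∨ u = b → v ∈ ArgS (σ F) → (u, v) ∉ PairsS (σ F) →
      (u = a ∧ v = b) ∨ (u = b ∧ v = a) := by
    rintro u v (rfl | rfl) hv huv
    · refine Or.inl ⟨rfl, by_contra fun hvb => ?_⟩
      rcases eq_or_ne v u with rfl | hvu
      exacts [huv (pairsS_self ha), huv (hpaired v hv hvu hvb).1]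
    · refine Or.inr ⟨rfl, by_contra fun hva => ?_⟩
      rcases eq_or_ne v u with rfl | hvu
      exacts [huv (pairsS_self hb), huv (hpaired v hv hva hvu).2]
  intro x y hxy
  by_cases hx : x = a ∨ x = b
  · rcases key hx (hArg y (F.R_sub _ hxy).2) (hnR hxy) with h | h
    exacts [Or.inl h, Or.inr (Or.inl h)]
  by_cases hy : y = a ∨ y = b
  · rcases key hy (hArg x (F.R_sub _ hxy).1) (fun h => hnR hxy (pairsS_symm h)) with h | h
    exacts [Or.inr (Or.inl h.symm), Or.inl h.symm]
  obtain ⟨hxa, hxb⟩ := not_or.1 hx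
  obtain ⟨hya, hyb⟩ := not_or.1 hy
  exact Or.inr (Or.inr ⟨hxa, hxb, hya, hyb⟩)

end ExtensionSets

theorem odd_extensions_no_size_two_component_general (σ : Semantics)
    (hσ : σ ∈ StandardSemantics) (𝕊 : Set (Set ℕ))
    (hodd : Odd 𝕊.ncard) (K : Set ℕ) (hK : K ∈ compsS 𝕊) (hK2 : K.ncard = 2) :
    ¬ ∃ F : AF, AFCompact σ F ∧ σ F = 𝕊 := by
  rintro ⟨F, hcomp, rfl⟩
  obtain ⟨a, b, hab, ha, hb, hnab, hpaired⟩ := exists_pair_of_mem_compsS hK hK2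
  have hcf : ∀ S ∈ σ F, S ∈ F.cf := fun S hS => mem_cf_of_mem_standardSemantics hσ hS
  have hiso := isolatedPair_of_forall_pairsS hcomp hcf ha hb hpaired
  have hA : ∀ {x}, x ∈ ArgS (σ F) → x ∈ F.A := fun ⟨S, hS, hxS⟩ => (hcf S hS).1 hxS
  have hexactly : ∀ S ∈ σ F, a ∈ S ↔ b ∉ S := fun S hS =>
    ⟨fun haS hbS => hnab ⟨S, hS, haS, hbS⟩,
      (hiso.mem_or_mem hσ hab (hA ha) (hA hb) hS).resolve_right⟩
  have hSa : ∃ S ∈ σ F, a ∈ S ∧ b ∉ S :=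
    let ⟨S, hS, haS⟩ := ha
    ⟨S, hS, haS, (hexactly S hS).1 haS⟩
  have hSb : ∃ S ∈ σ F, b ∈ S ∧ a ∉ S :=
    let ⟨S, hS, hbS⟩ := hb
    ⟨S, hS, hbS, fun haS => (hexactly S hS).1 haS hbS⟩
  refine Nat.not_even_iff_odd.2 hodd
    (even_ncard_of_involutive (f := image (swap a b)) (p := (a ∈ ·)) ?_ ?_ ?_)
  · intro S
    simp [image_image]
  · exact fun S hS => hiso.swap_image_mem hσ hab (hA ha) (hA hb) hSa hSb hS
  · intro S hS
    rw [mem_image_equiv, symm_swap, swap_apply_left, hexactly S hS, not_not]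

theorem odd_extensions_no_size_two_component (σ : Semantics)
    (hσ : σ ∈ StandardSemantics) (𝕊 : Set (Set ℕ)) (hext : IsExtensionSet 𝕊)
    (hodd : Odd 𝕊.ncard) (K : Set ℕ) (hK : K ∈ compsS 𝕊) (hK2 : K.ncard = 2) :
    ¬ ∃ F : AF, AFCompact σ F ∧ σ F = 𝕊 :=
  odd_extensions_no_size_two_component_general σ hσ 𝕊 hodd K hK hK2
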